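/- arXiv:math/0503589 — 4 statements merged into one kernel-verified Lean document; each statement's English description precedes it below -/
import Mathlib

section
/- Let X_1, ..., X_n be i.i.d. random variables with values in [0,1], let 1/2 ≤ c ≤ 1 be a fixed sampling cost, and let Y_i = X_i - i·c for i = 1, ..., n. Then M(Y_1,...,Y_n) - V(Y_1,...,Y_n) ≤ (1-c)/4. -/
/-!
Stopping at once gives `V ≥ E Y₁`. Since `c ≥ 1/2`, every `Y_i` with `i ≥ 3` is at most
`1 - 3c ≤ -c ≤ Y₁`, so the prophet gains over `Y₁` at most `E (X₂ - X₁ - c)⁺`. This excess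
vanishes unless `X₂ > c` and `X₁ < 1 - c`, and is then at most `1 - c`; by independence it is
bounded by `(1 - c) p q` with `p = P(X₂ > c)`, `q = P(X₁ < 1 - c)`. As `X₁` and `X₂` have the same
law and the events `{X₂ > c}`, `{X₂ < 1 - c}` are disjoint, `p + q ≤ 1`, whence `p q ≤ 1/4`.
-/

open MeasureTheory ProbabilityTheory

/-- The σ-algebra generated by `Y 1, ..., Y i`. -/
def priorSigma {Ω : Type*} (Y : ℕ → Ω → ℝ) (i : ℕ) : MeasurableSpace Ω :=
  ⨆ j ∈ Finset.Icc 1 i, MeasurableSpace.comap (Y j) Real.measurableSpace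

/-- `τ` is a stopping rule for `Y 1, ..., Y n`: it takes values in `{1, ..., n}` and
each event `{τ = i}` depends only on `Y 1, ..., Y i`. -/
def IsStopRule {Ω : Type*} (Y : ℕ → Ω → ℝ) (n : ℕ) (τ : Ω → ℕ) : Prop :=
  (∀ ω, τ ω ∈ Finset.Icc 1 n) ∧
  ∀ i ∈ Finset.Icc 1 n, MeasurableSet[priorSigma Y i] {ω | τ ω = i}

/-- `V(Y_1,...,Y_n) = sup_τ E(Y_τ)`: the optimal expected return of the statistician. -/
noncomputable def Vn {Ω : Type*} [MeasurableSpace Ω] (μ : Measure Ω)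
    (Y : ℕ → Ω → ℝ) (n : ℕ) : ℝ :=
  sSup {r | ∃ τ, IsStopRule Y n τ ∧ r = ∫ ω, Y (τ ω) ω ∂μ}

/-- `M(Y_1,...,Y_n) = E(max_{1 ≤ i ≤ n} Y_i)`: the expected return of the prophet. -/
noncomputable def Mn {Ω : Type*} [MeasurableSpace Ω] (μ : Measure Ω)
    (Y : ℕ → Ω → ℝ) (n : ℕ) : ℝ :=
  ∫ ω, sSup ((fun i => Y i ω) '' Set.Icc 1 n) ∂μ

lemma isStopRule_const_one {Ω : Type*} {Y : ℕ → Ω → ℝ} {n : ℕ} (hn : 1 ≤ n) :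
    IsStopRule Y n fun _ => 1 := by
  refine ⟨fun _ => Finset.mem_Icc.mpr ⟨le_rfl, hn⟩, fun i _ => ?_⟩
  by_cases hi : 1 = i <;> simp [hi]

section ProphetAndStatistician

variable {Ω : Type*} [MeasurableSpace Ω] {μ : Measure Ω} {Y : ℕ → Ω → ℝ} {n : ℕ}

lemma integral_le_max_of_forall_le [IsProbabilityMeasure μ] {f : Ω → ℝ} {C : ℝ}
    (hf : ∀ ω, f ω ≤ C) : ∫ ω, f ω ∂μ ≤ max C 0 := by
  by_cases hint : Integrable f μ
  · calc ∫ ω, f ω ∂μ ≤ ∫ _, C ∂μ := integral_mono hint (integrable_const C) hf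
      _ = C := by simp
      _ ≤ max C 0 := le_max_left _ _
  · rw [integral_undef hint]
    exact le_max_right _ _

lemma integral_le_Vn [IsProbabilityMeasure μ] {τ : Ω → ℕ} {C : ℝ} (hτ : IsStopRule Y n τ)
    (hY : ∀ i ∈ Finset.Icc 1 n, ∀ ω, Y i ω ≤ C) : ∫ ω, Y (τ ω) ω ∂μ ≤ Vn μ Y n := by
  refine le_csSup ⟨max C 0, ?_⟩ ⟨τ, hτ, rfl⟩
  rintro _ ⟨σ, hσ, rfl⟩
  exact integral_le_max_of_forall_le fun ω => hY _ (hσ.1 ω) ω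

lemma Mn_le_integral (hn : 1 ≤ n) (hY : ∀ i ∈ Set.Icc 1 n, Integrable (Y i) μ) {g : Ω → ℝ}
    (hg : Integrable g μ) (hle : ∀ ω, ∀ i ∈ Set.Icc 1 n, Y i ω ≤ g ω) :
    Mn μ Y n ≤ ∫ ω, g ω ∂μ := by
  have hne : (Finset.Icc 1 n).Nonempty := ⟨1, Finset.mem_Icc.mpr ⟨le_rfl, hn⟩⟩
  have hsup : ∀ ω, sSup ((fun i => Y i ω) '' Set.Icc 1 n) = (Finset.Icc 1 n).sup' hne Y ω := by
    intro ω
    rw [Finset.sup'_apply, Finset.sup'_eq_csSup_image, Finset.coe_Icc]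
  have hint : Integrable ((Finset.Icc 1 n).sup' hne Y) μ :=
    Finset.sup'_induction (p := (Integrable · μ)) hne Y (fun _ h₁ _ h₂ => h₁.sup h₂)
      fun i hi => hY i (by simpa using hi)
  simp only [Mn, hsup]
  refine integral_mono hint hg fun ω => ?_
  rw [Finset.sup'_apply]
  exact Finset.sup'_le _ _ fun i hi => hle ω i (by simpa using hi)

end ProphetAndStatistician

lemma le_first_add_posPart_sub {x y : ℕ → ℝ} {c : ℝ} (hc : 1 / 2 ≤ c)
    (hy : ∀ i, y i = x i - i * c) {i : ℕ} (hi : 1 ≤ i) (hxi : x i ≤ 1) (hx1 : 0 ≤ x 1) :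
    y i ≤ y 1 + max (y 2 - y 1) 0 := by
  rcases (show i = 1 ∨ i = 2 ∨ 3 ≤ i by omega) with rfl | rfl | hi3
  · exact le_add_of_nonneg_right (le_max_right _ _)
  · linarith [le_max_left (y 2 - y 1) 0]
  · have hi3' : (3 : ℝ) ≤ i := by exact_mod_cast hi3
    have hcost : 3 * c ≤ i * c := by nlinarith
    have := le_max_right (y 2 - y 1) 0
    rw [hy i, hy 1] at *
    push_cast at *
    linarith

lemma integral_posPart_sub_sub_le {Ω : Type*} [MeasurableSpace Ω] {μ : Measure Ω}
    [IsProbabilityMeasure μ] {X₁ X₂ : Ω → ℝ} {c : ℝ} (hX₁ : Measurable X₁) (hX₂ : Measurable X₂)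
    (hind : IndepFun X₂ X₁ μ) (hid : IdentDistrib X₂ X₁ μ μ) (h₁ : ∀ ω, 0 ≤ X₁ ω)
    (h₂ : ∀ ω, X₂ ω ≤ 1) (hc0 : 1 / 2 ≤ c) (hc1 : c ≤ 1) :
    ∫ ω, max (X₂ ω - X₁ ω - c) 0 ∂μ ≤ (1 - c) / 4 := by
  set A := X₂ ⁻¹' Set.Ioi c
  set B := X₁ ⁻¹' Set.Iio (1 - c)
  have hA : MeasurableSet A := hX₂ measurableSet_Ioi
  have hAB : MeasurableSet (A ∩ B) := hA.inter (hX₁ measurableSet_Iio)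
  have hpt : ∀ ω, max (X₂ ω - X₁ ω - c) 0 ≤ (A ∩ B).indicator (fun _ => 1 - c) ω := by
    intro ω
    have hx₁ := h₁ ω
    have hx₂ := h₂ ω
    by_cases hω : ω ∈ A ∩ B
    · rw [Set.indicator_of_mem hω]
      exact max_le (by linarith) (by linarith [hω.1.out])
    · rw [Set.indicator_of_notMem hω]
      simp only [A, B, Set.mem_inter_iff, Set.mem_preimage, Set.mem_Ioi, Set.mem_Iio,
        not_and_or, not_lt] at hω
      exact max_le (by rcases hω with h | h <;> linarith) le_rfl
  have hprod : μ.real (A ∩ B) = μ.real A * μ.real B := by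
    simp only [A, B, measureReal_def]
    rw [hind.measure_inter_preimage_eq_mul _ _ measurableSet_Ioi measurableSet_Iio,
      ENNReal.toReal_mul]
  have hsum : μ.real A + μ.real B ≤ 1 := by
    have hB : μ.real B = μ.real (X₂ ⁻¹' Set.Iio (1 - c)) := by
      simp only [B, measureReal_def, hid.measure_mem_eq measurableSet_Iio]
    have hdisj : Disjoint A (X₂ ⁻¹' Set.Iio (1 - c)) :=
      Set.disjoint_left.mpr fun ω (hωA : c < X₂ ω) (hωB : X₂ ω < 1 - c) => by linarith
    rw [hB, ← measureReal_union hdisj (hX₂ measurableSet_Iio)]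
    exact measureReal_le_one
  have hA0 : 0 ≤ μ.real A := measureReal_nonneg
  have hB0 : 0 ≤ μ.real B := measureReal_nonneg
  calc ∫ ω, max (X₂ ω - X₁ ω - c) 0 ∂μ
      ≤ ∫ ω, (A ∩ B).indicator (fun _ => 1 - c) ω ∂μ :=
        integral_mono_of_nonneg (ae_of_all _ fun _ => le_max_right _ _)
          ((integrable_const _).indicator hAB) (ae_of_all _ hpt)
    _ = (1 - c) * (μ.real A * μ.real B) := by
        rw [integral_indicator_const _ hAB, hprod, smul_eq_mul, mul_comm]
    _ ≤ (1 - c) * (1 / 4) :=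
        mul_le_mul_of_nonneg_left (by nlinarith [sq_nonneg (μ.real A - μ.real B)]) (by linarith)
    _ = (1 - c) / 4 := by ring

set_option linter.unusedVariables false

theorem stmt1
    {Ω : Type*} [MeasurableSpace Ω] (μ : Measure Ω) [IsProbabilityMeasure μ]
    (n : ℕ) (X : ℕ → Ω → ℝ)
    (hmeas : ∀ i, Measurable (X i))
    (hindep : iIndepFun (fun i : Fin n => X (i.1 + 1)) μ)
    (hident : ∀ i ∈ Set.Icc 1 n, IdentDistrib (X i) (X 1) μ μ)
    (hval : ∀ i ∈ Set.Icc 1 n, ∀ ω, X i ω ∈ Set.Icc (0:ℝ) 1)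
    (c : ℝ) (Y : ℕ → Ω → ℝ) (hY : ∀ i ω, Y i ω = X i ω - i * c)
    (hn : 1 ≤ n) (hc0 : 1/2 ≤ c) (hc : c ≤ 1) :
    Mn μ Y n - Vn μ Y n ≤ (1 - c) / 4 := by
  have h1n : 1 ∈ Set.Icc 1 n := ⟨le_rfl, hn⟩
  have hYint : ∀ i ∈ Set.Icc 1 n, Integrable (Y i) μ := fun i hi => by
    rw [show Y i = X i - fun _ => (i : ℝ) * c from funext (hY i)]
    exact (Integrable.of_mem_Icc 0 1 (hmeas i).aemeasurable (ae_of_all _ (hval i hi))).sub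
      (integrable_const _)
  have hV : ∫ ω, Y 1 ω ∂μ ≤ Vn μ Y n :=
    integral_le_Vn (C := 1) (isStopRule_const_one hn) fun i hi ω => by
      rw [hY]
      have hXi := (hval i (by simpa using hi) ω).2
      have hcost : 0 ≤ (i : ℝ) * c := mul_nonneg i.cast_nonneg (by linarith)
      linarith
  rcases (show n = 1 ∨ 2 ≤ n by omega) with rfl | hn2
  · have hM := Mn_le_integral hn hYint (hYint 1 h1n) fun ω i hi => by
      rw [show i = 1 by simpa using hi]
    linarith
  have h2n : 2 ∈ Set.Icc 1 n := ⟨by omega, hn2⟩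
  have hexcess : ∫ ω, max (Y 2 ω - Y 1 ω) 0 ∂μ ≤ (1 - c) / 4 := by
    have hind : IndepFun (X 2) (X 1) μ := by
      simpa using hindep.indepFun (i := ⟨1, by omega⟩) (j := ⟨0, by omega⟩) (by simp)
    simp only [hY, Nat.cast_ofNat, Nat.cast_one]
    convert integral_posPart_sub_sub_le (hmeas 1) (hmeas 2) hind (hident 2 h2n)
      (fun ω => (hval 1 h1n ω).1) (fun ω => (hval 2 h2n ω).2) hc0 hc using 4
    ring
  have hexcess_int : Integrable (fun ω => max (Y 2 ω - Y 1 ω) 0) μ :=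
    ((hYint 2 h2n).sub (hYint 1 h1n)).sup (integrable_zero _ _ _)
  have hM := Mn_le_integral (g := fun ω => Y 1 ω + max (Y 2 ω - Y 1 ω) 0) hn hYint
    ((hYint 1 h1n).add hexcess_int) fun ω i hi =>
    le_first_add_posPart_sub hc0 (fun i => hY i ω) hi.1 (hval i hi ω).2 (hval 1 h1n ω).1
  rw [integral_add (hYint 1 h1n) hexcess_int] at hM
  linarith
end

section
/- Let 0 < c ≤ 1/2, let n ≥ ⟦1/c⟧ + 1, and let X_1, ..., X_n be i.i.d. random variables with P(X_1 = 1) = c = 1 - P(X_1 = 0). With Y_i = X_i - i·c, one has M(Y_1,...,Y_n) - V(Y_1,...,Y_n) = ⟦1/c⟧·c·(1-c)^{⟦1/c⟧+1}; that is, the upper bound of the prophet inequality for fixed cost c ≤ 1/2 is attained. -/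
open MeasureTheory ProbabilityTheory

set_option linter.unusedVariables false

/-!
Write `S_t = X_1 + ⋯ + X_t`. By independence, Wald's identity `E[S_τ - τ c] = 0` holds for
every stopping rule `τ`, and `Y_τ = (S_τ - τ c) - S_{τ-1} ≤ S_τ - τ c`; hence `V ≤ 0`, and
stopping at time `1` shows `V = 0`.

For the prophet, let `k = ⟦1/c⟧` and let `ρ` be the first success time truncated at `k + 1`.
A success after time `k + 1` is worth at most `1 - (k + 2) c ≤ -c`, which `Y_1` already
guarantees, so `max_i Y_i = Y_ρ + k c · 1{X_1 = ⋯ = X_{k+1} = 0}`. Since `S_{ρ-1} = 0`,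
Wald's identity gives `E[Y_ρ] = 0`, whence `M = k c (1 - c)^{k+1}`.
-/

section PriorSigma

variable {Ω : Type*} {X Y : ℕ → Ω → ℝ} {i j : ℕ}

lemma measurable_priorSigma (hj : j ∈ Finset.Icc 1 i) : Measurable[priorSigma X i] (X j) :=
  Measurable.of_comap_le (le_iSup₂ (f := fun j (_ : j ∈ Finset.Icc 1 i) =>
    MeasurableSpace.comap (X j) Real.measurableSpace) j hj)

lemma priorSigma_mono {i i' : ℕ} (h : i ≤ i') : priorSigma X i ≤ priorSigma X i' :=
  biSup_mono fun j hj => by simp only [Finset.mem_Icc] at hj ⊢; omega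

lemma priorSigma_le [MeasurableSpace Ω] (hmeas : ∀ i, Measurable (X i)) :
    priorSigma X i ≤ ‹MeasurableSpace Ω› :=
  iSup₂_le fun j _ => (hmeas j).comap_le

lemma priorSigma_le_priorSigma (h : ∀ j ∈ Finset.Icc 1 i, Measurable[priorSigma X i] (Y j)) :
    priorSigma Y i ≤ priorSigma X i :=
  iSup₂_le fun j hj => (h j hj).comap_le

end PriorSigma

namespace IsStopRule

variable {Ω : Type*} {X Y : ℕ → Ω → ℝ} {n : ℕ} {τ : Ω → ℕ}

lemma mono (h : ∀ i, priorSigma Y i ≤ priorSigma X i) (hτ : IsStopRule Y n τ) :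
    IsStopRule X n τ :=
  ⟨hτ.1, fun i hi => h i _ (hτ.2 i hi)⟩

lemma measurableSet_eq [MeasurableSpace Ω] (hmeas : ∀ i, Measurable (X i))
    (hτ : IsStopRule X n τ) {i : ℕ} (hi : i ∈ Finset.Icc 1 n) : MeasurableSet {ω | τ ω = i} :=
  priorSigma_le hmeas _ (hτ.2 i hi)

lemma measurableSet_le (hτ : IsStopRule X n τ) {i : ℕ} (hi : i ∈ Finset.Icc 1 n) :
    MeasurableSet[priorSigma X (i - 1)] {ω | i ≤ τ ω} := by
  have hset : {ω | i ≤ τ ω} = (⋃ j ∈ Finset.Icc 1 (i - 1), {ω | τ ω = j})ᶜ := by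
    ext ω
    have := Finset.mem_Icc.1 (hτ.1 ω)
    simp only [Set.mem_ofPred_eq, Set.mem_compl_iff, Set.mem_iUnion, Finset.mem_Icc,
      exists_prop, not_exists, not_and]
    constructor
    · intro h j _ _; omega
    · intro h; by_contra h'; exact h (τ ω) (by omega) (by omega)
  rw [hset]
  refine (Finset.measurableSet_biUnion _ fun j hj => ?_).compl
  simp only [Finset.mem_Icc] at hi hj
  exact priorSigma_mono (by omega) _ (hτ.2 j (Finset.mem_Icc.2 ⟨hj.1, by omega⟩))

end IsStopRule

section StoppedSums

variable {Ω : Type*} {τ : Ω → ℕ}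

lemma sum_Icc_stop_eq_sum_indicator (f : ℕ → Ω → ℝ) {N : ℕ} {ω : Ω} (hω : τ ω ≤ N) :
    ∑ i ∈ Finset.Icc 1 (τ ω), f i ω = ∑ i ∈ Finset.Icc 1 N, {ω | i ≤ τ ω}.indicator (f i) ω := by
  simp only [Set.indicator_apply, Set.mem_ofPred_eq, ← Finset.sum_filter]
  congr 1
  ext i
  simp only [Finset.mem_Icc, Finset.mem_filter]
  omega

variable [MeasurableSpace Ω] {μ : Measure Ω}

lemma integrable_comp_of_mem_finset {Z : ℕ → Ω → ℝ} {s : Finset ℕ} (hτ : ∀ ω, τ ω ∈ s)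
    (hτm : ∀ i ∈ s, MeasurableSet {ω | τ ω = i}) (hZ : ∀ i ∈ s, Integrable (Z i) μ) :
    Integrable (fun ω => Z (τ ω) ω) μ := by
  have hsum : (fun ω => Z (τ ω) ω) = fun ω => ∑ i ∈ s, {ω | τ ω = i}.indicator (Z i) ω := by
    ext ω
    rw [Finset.sum_eq_single_of_mem (τ ω) (hτ ω) fun i _ hi =>
      Set.indicator_of_notMem (fun h => hi h.symm) _,
      Set.indicator_of_mem (show ω ∈ {ω' | τ ω' = τ ω} from rfl)]
  rw [hsum]
  exact integrable_finsetSum s fun i hi => (hZ i hi).indicator (hτm i hi)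

variable [IsFiniteMeasure μ] {X : ℕ → Ω → ℝ} {N : ℕ}

lemma integrable_indicator_le_stop_sub (hmeas : ∀ i, Measurable (X i))
    (hint : ∀ i ∈ Finset.Icc 1 N, Integrable (X i) μ) (hτ : IsStopRule X N τ) (c : ℝ)
    {i : ℕ} (hi : i ∈ Finset.Icc 1 N) :
    Integrable ({ω | i ≤ τ ω}.indicator fun ω => X i ω - c) μ :=
  ((hint i hi).sub (integrable_const c)).indicator
    (priorSigma_le hmeas _ (hτ.measurableSet_le hi))

lemma integrable_sum_Icc_stop_sub (hmeas : ∀ i, Measurable (X i))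
    (hint : ∀ i ∈ Finset.Icc 1 N, Integrable (X i) μ) (hτ : IsStopRule X N τ) (c : ℝ) :
    Integrable (fun ω => ∑ i ∈ Finset.Icc 1 (τ ω), (X i ω - c)) μ := by
  simp_rw [sum_Icc_stop_eq_sum_indicator (fun i ω => X i ω - c) (Finset.mem_Icc.1 (hτ.1 _)).2]
  exact integrable_finsetSum _ fun i hi => integrable_indicator_le_stop_sub hmeas hint hτ c hi

/-- Wald's identity. -/
lemma integral_sum_Icc_stop_sub_eq_zero (hmeas : ∀ i, Measurable (X i))
    (hint : ∀ i ∈ Finset.Icc 1 N, Integrable (X i) μ) {c : ℝ}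
    (hmean : ∀ i ∈ Finset.Icc 1 N, ∀ A, MeasurableSet[priorSigma X (i - 1)] A →
      ∫ ω in A, X i ω ∂μ = μ.real A * c)
    (hτ : IsStopRule X N τ) :
    ∫ ω, ∑ i ∈ Finset.Icc 1 (τ ω), (X i ω - c) ∂μ = 0 := by
  simp_rw [sum_Icc_stop_eq_sum_indicator (fun i ω => X i ω - c) (Finset.mem_Icc.1 (hτ.1 _)).2]
  rw [integral_finsetSum _ fun i hi => integrable_indicator_le_stop_sub hmeas hint hτ c hi]
  refine Finset.sum_eq_zero fun i hi => ?_
  have hA := hτ.measurableSet_le hi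
  rw [integral_indicator (priorSigma_le hmeas _ hA),
    integral_sub (hint i hi).integrableOn (integrable_const c), hmean i hi _ hA,
    setIntegral_const, smul_eq_mul, sub_self]

end StoppedSums

section Sequences

variable {x : ℕ → ℝ} {c : ℝ}

lemma sum_Icc_sub_eq (x : ℕ → ℝ) (c : ℝ) (t : ℕ) :
    ∑ i ∈ Finset.Icc 1 t, (x i - c) = ∑ i ∈ Finset.Icc 1 t, x i - t * c := by
  rw [Finset.sum_sub_distrib, Finset.sum_const, Nat.card_Icc, Nat.add_sub_cancel, nsmul_eq_mul]

lemma sub_mul_le_sum_Icc_sub {t : ℕ} (ht : 1 ≤ t) (hx : ∀ i ∈ Finset.Icc 1 t, 0 ≤ x i) :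
    x t - t * c ≤ ∑ i ∈ Finset.Icc 1 t, (x i - c) := by
  rw [sum_Icc_sub_eq]
  gcongr
  exact Finset.single_le_sum hx (Finset.mem_Icc.2 ⟨ht, le_rfl⟩)

lemma sum_Icc_sub_eq_sub_mul {t : ℕ} (ht : 1 ≤ t) (hx : ∀ i ∈ Finset.Ico 1 t, x i = 0) :
    ∑ i ∈ Finset.Icc 1 t, (x i - c) = x t - t * c := by
  rw [sum_Icc_sub_eq, Finset.sum_eq_single_of_mem t (Finset.mem_Icc.2 ⟨ht, le_rfl⟩)
    fun i hi hit => hx i (by simp only [Finset.mem_Icc, Finset.mem_Ico] at hi ⊢; omega)]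

variable {n k : ℕ}

lemma sSup_image_sub_mul_of_first_one (hx : ∀ i ∈ Finset.Icc 1 n, x i ≤ 1) (hc : 0 ≤ c)
    (hkc : k * c ≤ 1) {t : ℕ} (ht1 : 1 ≤ t) (htk : t ≤ k + 1) (htn : t ≤ n) (hxt : x t = 1)
    (hx0 : ∀ i ∈ Finset.Ico 1 t, x i = 0) :
    sSup ((fun i => x i - i * c) '' Set.Icc 1 n) = 1 - t * c := by
  refine IsGreatest.csSup_eq ⟨⟨t, ⟨ht1, htn⟩, by simp only [hxt]⟩, ?_⟩
  rintro _ ⟨i, ⟨hi1, hin⟩, rfl⟩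
  have hi : (1 : ℝ) ≤ i := by exact_mod_cast hi1
  have ht : (t : ℝ) ≤ k + 1 := by exact_mod_cast htk
  rcases lt_or_ge i t with hit | hti
  · simp only [hx0 i (Finset.mem_Ico.2 ⟨hi1, hit⟩)]
    nlinarith
  · have hti : (t : ℝ) ≤ i := by exact_mod_cast hti
    have := hx i (Finset.mem_Icc.2 ⟨hi1, hin⟩)
    simp only
    nlinarith

lemma sSup_image_sub_mul_of_no_one (hx : ∀ i ∈ Finset.Icc 1 n, x i ≤ 1) (hc : 0 ≤ c)
    (hkc : 1 ≤ (k + 1) * c) (hn : 1 ≤ n) (hx0 : ∀ i ∈ Finset.Icc 1 (k + 1), x i = 0) :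
    sSup ((fun i => x i - i * c) '' Set.Icc 1 n) = -c := by
  refine IsGreatest.csSup_eq ⟨⟨1, ⟨le_rfl, hn⟩, ?_⟩, ?_⟩
  · simp [hx0 1 (Finset.mem_Icc.2 ⟨le_rfl, by omega⟩)]
  rintro _ ⟨i, ⟨hi1, hin⟩, rfl⟩
  have hi : (1 : ℝ) ≤ i := by exact_mod_cast hi1
  rcases le_or_gt i (k + 1) with hik | hki
  · simp only [hx0 i (Finset.mem_Icc.2 ⟨hi1, hik⟩)]
    nlinarith
  · have hki : (k : ℝ) + 2 ≤ i := by exact_mod_cast hki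
    have := hx i (Finset.mem_Icc.2 ⟨hi1, hin⟩)
    simp only
    nlinarith

end Sequences

section Bernoulli

variable {Ω : Type*} [MeasurableSpace Ω] {μ : Measure Ω} [IsProbabilityMeasure μ] {c : ℝ}
  {Z : Ω → ℝ}

lemma ae_eq_zero_or_eq_one (hZ : Measurable Z) (hc0 : 0 ≤ c) (hc1 : c ≤ 1)
    (h1 : μ (Z ⁻¹' {1}) = ENNReal.ofReal c) (h0 : μ (Z ⁻¹' {0}) = ENNReal.ofReal (1 - c)) :
    ∀ᵐ ω ∂μ, Z ω = 0 ∨ Z ω = 1 := by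
  have hdisj : Disjoint (Z ⁻¹' {0}) (Z ⁻¹' {1}) :=
    Disjoint.preimage Z (Set.disjoint_singleton.2 zero_ne_one)
  have hunion : μ (Z ⁻¹' {0} ∪ Z ⁻¹' {1}) = 1 := by
    rw [measure_union hdisj (hZ (measurableSet_singleton 1)), h0, h1,
      ← ENNReal.ofReal_add (by linarith) hc0, sub_add_cancel, ENNReal.ofReal_one]
  have hmeas := (hZ (measurableSet_singleton 0)).union (hZ (measurableSet_singleton 1))
  exact (ae_iff_measure_eq hmeas.nullMeasurableSet).2 (by rw [measure_univ]; exact hunion)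

lemma ae_eq_indicator_one (hZ : Measurable Z) (hc0 : 0 ≤ c) (hc1 : c ≤ 1)
    (h1 : μ (Z ⁻¹' {1}) = ENNReal.ofReal c) (h0 : μ (Z ⁻¹' {0}) = ENNReal.ofReal (1 - c)) :
    Z =ᵐ[μ] (Z ⁻¹' {1}).indicator 1 := by
  filter_upwards [ae_eq_zero_or_eq_one hZ hc0 hc1 h1 h0] with ω hω
  rcases hω with hω | hω <;> simp [hω]

end Bernoulli

structure IndepBernoulli {Ω : Type*} [MeasurableSpace Ω] (μ : Measure Ω) (X : ℕ → Ω → ℝ)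
    (n : ℕ) (c : ℝ) : Prop where
  nonneg : 0 ≤ c
  le_one : c ≤ 1
  measurable : ∀ i, Measurable (X i)
  iIndepFun : iIndepFun (fun i : Fin n => X (i.1 + 1)) μ
  measure_one : ∀ i ∈ Finset.Icc 1 n, μ (X i ⁻¹' {1}) = ENNReal.ofReal c
  measure_zero : ∀ i ∈ Finset.Icc 1 n, μ (X i ⁻¹' {0}) = ENNReal.ofReal (1 - c)

namespace IndepBernoulli

variable {Ω : Type*} [MeasurableSpace Ω] {μ : Measure Ω} {X : ℕ → Ω → ℝ} {n : ℕ} {c : ℝ}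
  {i : ℕ}

lemma indep_priorSigma (hX : IndepBernoulli μ X n c) (hi : i ∈ Finset.Icc 1 n) :
    Indep (priorSigma X (i - 1)) (MeasurableSpace.comap (X i) Real.measurableSpace) μ := by
  obtain ⟨hi1, hin⟩ := Finset.mem_Icc.1 hi
  let m : Fin n → MeasurableSpace Ω := fun j =>
    MeasurableSpace.comap (X (j.1 + 1)) Real.measurableSpace
  have hm : ∀ j (hj1 : 1 ≤ j) (hj : j - 1 < n),
      MeasurableSpace.comap (X j) Real.measurableSpace = m ⟨j - 1, hj⟩ := by
    intro j hj1 _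
    simp only [m, Nat.sub_add_cancel hj1]
  let S : Set (Fin n) := {j | j.1 + 1 < i}
  let T : Set (Fin n) := {⟨i - 1, by omega⟩}
  have hST : Disjoint S T := by
    simp only [S, T, Set.disjoint_singleton_right, Set.mem_ofPred_eq]
    omega
  have key := indep_iSup_of_disjoint (fun j => (hX.measurable _).comap_le)
    ((iIndepFun_iff_iIndep _ _ _).1 hX.iIndepFun) hST
  refine indep_of_indep_of_le_right (indep_of_indep_of_le_left key ?_) ?_
  · refine iSup₂_le fun j hj => ?_
    obtain ⟨hj1, hj2⟩ := Finset.mem_Icc.1 hj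
    rw [hm j hj1 (by omega)]
    exact le_iSup₂ (f := fun j (_ : j ∈ S) => m j) _ (show j - 1 + 1 < i by omega)
  · rw [hm i hi1 (by omega)]
    exact le_iSup₂ (f := fun j (_ : j ∈ T) => m j) _ rfl

lemma measure_inter_preimage (hX : IndepBernoulli μ X n c) (hi : i ∈ Finset.Icc 1 n)
    {A : Set Ω} (hA : MeasurableSet[priorSigma X (i - 1)] A) {s : Set ℝ} (hs : MeasurableSet s) :
    μ (A ∩ X i ⁻¹' s) = μ A * μ (X i ⁻¹' s) :=
  (Indep_iff _ _ μ).1 (hX.indep_priorSigma hi) A _ hA ⟨s, hs, rfl⟩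

variable [IsProbabilityMeasure μ]

lemma ae_eq_indicator (hX : IndepBernoulli μ X n c) (hi : i ∈ Finset.Icc 1 n) :
    X i =ᵐ[μ] (X i ⁻¹' {1}).indicator 1 :=
  ae_eq_indicator_one (hX.measurable i) hX.nonneg hX.le_one (hX.measure_one i hi)
    (hX.measure_zero i hi)

lemma integrable (hX : IndepBernoulli μ X n c) (hi : i ∈ Finset.Icc 1 n) :
    Integrable (X i) μ :=
  ((integrable_const 1).indicator (hX.measurable i (measurableSet_singleton 1))).congr
    (hX.ae_eq_indicator hi).symm

lemma setIntegral_eq (hX : IndepBernoulli μ X n c) (hi : i ∈ Finset.Icc 1 n) {A : Set Ω}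
    (hA : MeasurableSet[priorSigma X (i - 1)] A) :
    ∫ ω in A, X i ω ∂μ = μ.real A * c := by
  rw [integral_congr_ae (ae_restrict_of_ae (hX.ae_eq_indicator hi)),
    integral_indicator_one (hX.measurable i (measurableSet_singleton 1)),
    measureReal_restrict_apply (hX.measurable i (measurableSet_singleton 1)), Set.inter_comm,
    measureReal_def,
    hX.measure_inter_preimage hi hA (measurableSet_singleton 1), hX.measure_one i hi,
    ENNReal.toReal_mul, ENNReal.toReal_ofReal hX.nonneg, ← measureReal_def]

lemma ae_forall_eq_zero_or_eq_one (hX : IndepBernoulli μ X n c) :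
    ∀ᵐ ω ∂μ, ∀ i ∈ Finset.Icc 1 n, X i ω = 0 ∨ X i ω = 1 :=
  (Filter.eventually_all_finset _).2 fun i hi =>
    ae_eq_zero_or_eq_one (hX.measurable i) hX.nonneg hX.le_one (hX.measure_one i hi)
      (hX.measure_zero i hi)

lemma measureReal_biInter_eq_zero (hX : IndepBernoulli μ X n c) {m : ℕ} (hm : m ≤ n) :
    μ.real (⋂ j ∈ Finset.Icc 1 m, X j ⁻¹' {0}) = (1 - c) ^ m := by
  induction m with
  | zero => simp
  | succ m ih =>
    have hi : m + 1 ∈ Finset.Icc 1 n := Finset.mem_Icc.2 ⟨by omega, hm⟩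
    have hB : MeasurableSet[priorSigma X (m + 1 - 1)] (⋂ j ∈ Finset.Icc 1 m, X j ⁻¹' {0}) :=
      Finset.measurableSet_biInter _ fun j hj =>
        measurable_priorSigma hj (measurableSet_singleton 0)
    rw [← Finset.insert_Icc_right_eq_Icc_add_one (by omega), Finset.set_biInter_insert,
      Set.inter_comm, measureReal_def, hX.measure_inter_preimage hi hB (measurableSet_singleton 0),
      hX.measure_zero _ hi, ENNReal.toReal_mul, ← measureReal_def, ih (by omega),
      ENNReal.toReal_ofReal (by linarith [hX.le_one]), pow_succ]

end IndepBernoulli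

section FirstSuccess

variable {Ω : Type*} {X : ℕ → Ω → ℝ} {m : ℕ}

lemma measurableSet_hittingBtwn_le {j : ℕ} (hj : j ≤ m) :
    MeasurableSet[priorSigma X j] {ω | hittingBtwn X {1} 1 m ω ≤ j} := by
  rcases hj.lt_or_eq with hj | rfl
  · have hset : {ω | hittingBtwn X {1} 1 m ω ≤ j} = ⋃ l ∈ Finset.Icc 1 j, X l ⁻¹' {1} := by
      ext ω
      simp [hittingBtwn_le_iff_of_lt j hj]
    rw [hset]
    exact Finset.measurableSet_biUnion _ fun l hl =>
      measurable_priorSigma hl (measurableSet_singleton 1)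
  · simp only [hittingBtwn_le, Set.ofPred_true, MeasurableSet.univ]

lemma isStopRule_hittingBtwn (hm : 1 ≤ m) : IsStopRule X m (hittingBtwn X {1} 1 m) := by
  refine ⟨fun ω => Finset.mem_Icc.2 (hittingBtwn_mem_Icc hm ω), fun i hi => ?_⟩
  obtain ⟨hi1, him⟩ := Finset.mem_Icc.1 hi
  have hset : {ω | hittingBtwn X {1} 1 m ω = i} =
      {ω | hittingBtwn X {1} 1 m ω ≤ i} ∩ {ω | hittingBtwn X {1} 1 m ω ≤ i - 1}ᶜ := by
    ext ω
    simp only [Set.mem_ofPred_eq, Set.mem_inter_iff, Set.mem_compl_iff]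
    omega
  rw [hset]
  exact (measurableSet_hittingBtwn_le him).inter
    (priorSigma_mono (Nat.sub_le i 1) _ (measurableSet_hittingBtwn_le (by omega)).compl)

variable {n k : ℕ} {c : ℝ}

lemma sSup_image_sub_mul_eq {ω : Ω} (hω : ∀ i ∈ Finset.Icc 1 n, X i ω = 0 ∨ X i ω = 1)
    (hc : 0 ≤ c) (hkn : k + 1 ≤ n) (hkc : k * c ≤ 1) (hkc' : 1 ≤ (k + 1) * c) :
    sSup ((fun i => X i ω - i * c) '' Set.Icc 1 n) =
      ∑ i ∈ Finset.Icc 1 (hittingBtwn X {1} 1 (k + 1) ω), (X i ω - c) +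
        (⋂ j ∈ Finset.Icc 1 (k + 1), X j ⁻¹' {0}).indicator (fun _ => k * c) ω := by
  set ρ := hittingBtwn X {1} 1 (k + 1) ω with hρ
  have hle : ∀ i ∈ Finset.Icc 1 n, X i ω ≤ 1 := fun i hi => by
    rcases hω i hi with h | h <;> simp [h]
  have hmem : ∀ i, 1 ≤ i → i ≤ k + 1 → i ∈ Finset.Icc 1 n := fun i hi1 hik =>
    Finset.mem_Icc.2 ⟨hi1, by omega⟩
  obtain ⟨hρ1, hρk⟩ : 1 ≤ ρ ∧ ρ ≤ k + 1 := hittingBtwn_mem_Icc (by omega) ω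
  have hbefore : ∀ i ∈ Finset.Ico 1 ρ, X i ω = 0 := fun i hi => by
    obtain ⟨hi1, hiρ⟩ := Finset.mem_Ico.1 hi
    exact (hω i (hmem i hi1 (by omega))).resolve_right (notMem_of_lt_hittingBtwn hiρ hi1)
  rw [sum_Icc_sub_eq_sub_mul hρ1 hbefore]
  by_cases h : ∃ j ∈ Set.Icc 1 (k + 1), X j ω ∈ ({1} : Set ℝ)
  · obtain ⟨j, hj, hj1⟩ := h
    have hB : ω ∉ ⋂ j ∈ Finset.Icc 1 (k + 1), X j ⁻¹' {0} := by
      simp only [Set.mem_iInter, Set.mem_preimage]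
      intro hall
      have := hall j (Finset.mem_Icc.2 hj)
      simp_all
    have hone : X ρ ω = 1 := hittingBtwn_mem_set ⟨j, hj, hj1⟩
    rw [Set.indicator_of_notMem hB, add_zero, hone,
      sSup_image_sub_mul_of_first_one hle hc hkc hρ1 hρk (by omega) hone hbefore]
  · push Not at h
    have hzero : ∀ j ∈ Finset.Icc 1 (k + 1), X j ω = 0 := fun j hj =>
      (hω j (hmem j (Finset.mem_Icc.1 hj).1 (Finset.mem_Icc.1 hj).2)).resolve_right
        (h j (Finset.mem_Icc.1 hj))
    have hρend : ρ = k + 1 := hittingBtwn_eq_end_iff.2 fun ⟨j, hj, hj1⟩ => (h j hj hj1).elim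
    have hB : ω ∈ ⋂ j ∈ Finset.Icc 1 (k + 1), X j ⁻¹' {0} := by
      simpa only [Set.mem_iInter, Set.mem_preimage, Set.mem_singleton_iff] using hzero
    rw [Set.indicator_of_mem hB, hρend, hzero _ (Finset.mem_Icc.2 ⟨by omega, le_rfl⟩),
      sSup_image_sub_mul_of_no_one hle hc hkc' (by omega) hzero]
    push_cast
    ring

end FirstSuccess

section Values

variable {Ω : Type*} [MeasurableSpace Ω] {μ : Measure Ω} [IsProbabilityMeasure μ]
  {X : ℕ → Ω → ℝ} {n : ℕ} {c : ℝ}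

theorem Vn_sub_mul_eq_zero (hX : IndepBernoulli μ X n c) (hn : 1 ≤ n) :
    Vn μ (fun i ω => X i ω - i * c) n = 0 := by
  have h1n : 1 ∈ Finset.Icc 1 n := Finset.mem_Icc.2 ⟨le_rfl, hn⟩
  have hconst : IsStopRule (fun i ω => X i ω - i * c) n fun _ => 1 :=
    ⟨fun _ => h1n, fun _ _ => MeasurableSet.const _⟩
  refine IsGreatest.csSup_eq ⟨⟨fun _ => 1, hconst, ?_⟩, ?_⟩
  · rw [integral_sub (hX.integrable h1n) (integrable_const _), ← setIntegral_univ,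
      hX.setIntegral_eq h1n MeasurableSet.univ]
    simp
  rintro _ ⟨τ, hτ, rfl⟩
  have hτX : IsStopRule X n τ := hτ.mono fun i => priorSigma_le_priorSigma
    fun j hj => (measurable_priorSigma hj).sub_const _
  calc ∫ ω, X (τ ω) ω - τ ω * c ∂μ ≤ ∫ ω, ∑ i ∈ Finset.Icc 1 (τ ω), (X i ω - c) ∂μ := by
        refine integral_mono_ae ?_ (integrable_sum_Icc_stop_sub hX.measurable
          (fun i hi => hX.integrable hi) hτX c) ?_
        · exact integrable_comp_of_mem_finset (Z := fun i ω => X i ω - i * c) hτX.1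
            (fun i hi => hτX.measurableSet_eq hX.measurable hi)
            fun i hi => (hX.integrable hi).sub (integrable_const _)
        · filter_upwards [hX.ae_forall_eq_zero_or_eq_one] with ω hω
          refine sub_mul_le_sum_Icc_sub (x := fun i => X i ω) (Finset.mem_Icc.1 (hτX.1 ω)).1
            fun i hi => ?_
          rcases hω i (Finset.Icc_subset_Icc_right (Finset.mem_Icc.1 (hτX.1 ω)).2 hi)
            with h | h <;> simp [h]
    _ = 0 := integral_sum_Icc_stop_sub_eq_zero hX.measurable (fun i hi => hX.integrable hi)
        (fun i hi _ hA => hX.setIntegral_eq hi hA) hτX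

theorem Mn_sub_mul_eq (hX : IndepBernoulli μ X n c) {k : ℕ} (hkn : k + 1 ≤ n)
    (hkc : k * c ≤ 1) (hkc' : 1 ≤ (k + 1) * c) :
    Mn μ (fun i ω => X i ω - i * c) n = k * c * (1 - c) ^ (k + 1) := by
  have hsub : Finset.Icc 1 (k + 1) ⊆ Finset.Icc 1 n := Finset.Icc_subset_Icc_right hkn
  have hρ : IsStopRule X (k + 1) (hittingBtwn X {1} 1 (k + 1)) :=
    isStopRule_hittingBtwn (by omega)
  have hB : MeasurableSet (⋂ j ∈ Finset.Icc 1 (k + 1), X j ⁻¹' {0}) :=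
    Finset.measurableSet_biInter _ fun j _ => hX.measurable j (measurableSet_singleton 0)
  rw [Mn, integral_congr_ae (hX.ae_forall_eq_zero_or_eq_one.mono fun ω hω =>
      sSup_image_sub_mul_eq hω hX.nonneg hkn hkc hkc'),
    integral_add (integrable_sum_Icc_stop_sub hX.measurable (fun i hi => hX.integrable (hsub hi))
      hρ c) ((integrable_const _).indicator hB),
    integral_sum_Icc_stop_sub_eq_zero hX.measurable (fun i hi => hX.integrable (hsub hi))
      (fun i hi _ hA => hX.setIntegral_eq (hsub hi) hA) hρ,
    integral_indicator_const _ hB, hX.measureReal_biInter_eq_zero hkn, smul_eq_mul]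
  ring

end Values

lemma exists_nat_eq_ceil_one_div_sub_one {c : ℝ} (hc : 0 < c) :
    ∃ k : ℕ, ⌈1 / c⌉ - 1 = (k : ℤ) ∧ k * c < 1 ∧ 1 ≤ (k + 1) * c := by
  have hpos : 0 < ⌈1 / c⌉₊ := Nat.ceil_pos.2 (by positivity)
  have hk : ((⌈1 / c⌉₊ - 1 : ℕ) : ℝ) + 1 = ⌈1 / c⌉₊ := by
    rw [Nat.cast_sub hpos, Nat.cast_one, sub_add_cancel]
  refine ⟨⌈1 / c⌉₊ - 1, ?_, ?_, ?_⟩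
  · rw [← Int.natCast_ceil_eq_ceil (by positivity)]
    omega
  · have := Nat.ceil_lt_add_one (one_div_pos.2 hc).le
    rw [← hk, add_lt_add_iff_right, lt_div_iff₀ hc] at this
    exact this
  · rw [hk, ← div_le_iff₀ hc]
    exact Nat.le_ceil _

theorem stmt4
    {Ω : Type*} [MeasurableSpace Ω] (μ : Measure Ω) [IsProbabilityMeasure μ]
    (n : ℕ) (X : ℕ → Ω → ℝ)
    (hmeas : ∀ i, Measurable (X i))
    (hindep : iIndepFun (fun i : Fin n => X (i.1 + 1)) μ)
    (hident : ∀ i ∈ Set.Icc 1 n, IdentDistrib (X i) (X 1) μ μ)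
    (c : ℝ) (Y : ℕ → Ω → ℝ) (hY : ∀ i ω, Y i ω = X i ω - i * c)
    (hc0 : 0 < c) (hc : c ≤ 1/2)
    (hn : (⌈1/c⌉ - 1) + 1 ≤ (n : ℤ))
    (h1 : μ {ω | X 1 ω = 1} = ENNReal.ofReal c)
    (h0 : μ {ω | X 1 ω = 0} = ENNReal.ofReal (1 - c)) :
    Mn μ Y n - Vn μ Y n =
      ((⌈1/c⌉ - 1 : ℤ) : ℝ) * c * (1 - c) ^ ((⌈1/c⌉ - 1) + 1 : ℤ) := by
  obtain rfl : Y = fun i ω => X i ω - i * c := funext₂ hY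
  have hident' : ∀ i ∈ Finset.Icc 1 n, ∀ s, MeasurableSet s → μ (X i ⁻¹' s) = μ (X 1 ⁻¹' s) :=
    fun i hi _ hs => (hident i (Finset.coe_Icc 1 n ▸ hi)).measure_mem_eq hs
  have hX : IndepBernoulli μ X n c :=
    ⟨hc0.le, by linarith, hmeas, hindep,
      fun i hi => (hident' i hi _ (measurableSet_singleton 1)).trans h1,
      fun i hi => (hident' i hi _ (measurableSet_singleton 0)).trans h0⟩
  obtain ⟨k, hk, hkc, hkc'⟩ := exists_nat_eq_ceil_one_div_sub_one hc0
  rw [hk] at hn ⊢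
  rw [Mn_sub_mul_eq hX (by omega) hkc.le hkc', Vn_sub_mul_eq_zero hX (by omega), ← Nat.cast_succ,
    zpow_natCast, Int.cast_natCast, sub_zero]
end

section
/- (Balayage inequality, equation (3)) Let Y be an integrable real-valued random variable and let -∞ < a < b < ∞. Let Y_a^b denote a balayage of Y: a random variable with Y_a^b = Y on {Y ∉ [a,b]}, Y_a^b = a with probability (b-a)^{-1}·∫_{{Y∈[a,b]}} (b - Y) dP, and Y_a^b = b with probability (b-a)^{-1}·∫_{{Y∈[a,b]}} (Y - a) dP. Then E(Y_a^b) = E(Y), and for any random variable X independent of both Y and Y_a^b, E(max{X, Y}) ≤ E(max{X, Y_a^b}). -/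
open MeasureTheory ProbabilityTheory

set_option linter.unusedVariables false

/-- Balayage pointwise inequality: `max x ·` lies below its chord on `[a,b]`. -/
lemma maxlin {a b x y : ℝ} (h1 : a ≤ y) (h2 : y ≤ b) :
    (b - a) * max x y ≤ (b - y) * max x a + (y - a) * max x b := by
  have hxa := le_max_left x a
  have haa := le_max_right x a
  have hxb := le_max_left x b
  have hbb := le_max_right x b
  rcases max_cases x y with ⟨h, _⟩ | ⟨h, _⟩ <;> rw [h] <;> nlinarith

theorem stmt14
    {Ω : Type*} [MeasurableSpace Ω] (μ : Measure Ω) [IsProbabilityMeasure μ]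
    (Y Z X : Ω → ℝ) (a b : ℝ) (hab : a < b)
    (hYm : Measurable Y) (hYint : Integrable Y μ)
    (hZm : Measurable Z) (hZint : Integrable Z μ)
    (hXm : Measurable X) (hXint : Integrable X μ)
    (hZeq : ∀ ω, Y ω ∉ Set.Icc a b → Z ω = Y ω)
    (hZvals : ∀ ω, Y ω ∈ Set.Icc a b → Z ω = a ∨ Z ω = b)
    (hZa : μ {ω | Y ω ∈ Set.Icc a b ∧ Z ω = a} =
      ENNReal.ofReal ((b - a)⁻¹ * ∫ ω in {ω | Y ω ∈ Set.Icc a b}, (b - Y ω) ∂μ))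
    (hZb : μ {ω | Y ω ∈ Set.Icc a b ∧ Z ω = b} =
      ENNReal.ofReal ((b - a)⁻¹ * ∫ ω in {ω | Y ω ∈ Set.Icc a b}, (Y ω - a) ∂μ))
    (hXY : IndepFun X Y μ) (hXZ : IndepFun X Z μ) :
    (∫ ω, Z ω ∂μ = ∫ ω, Y ω ∂μ) ∧
    (∫ ω, max (X ω) (Y ω) ∂μ ≤ ∫ ω, max (X ω) (Z ω) ∂μ) := by
  have hba : (0:ℝ) < b - a := sub_pos.mpr hab
  set A : Set Ω := {ω | Y ω ∈ Set.Icc a b} with hAdef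
  have hA : MeasurableSet A := hYm measurableSet_Icc
  set Sa : Set Ω := A ∩ Z ⁻¹' {a} with hSadef
  set Sb : Set Ω := A ∩ Z ⁻¹' {b} with hSbdef
  have hSa : MeasurableSet Sa := hA.inter (hZm (measurableSet_singleton a))
  have hSb : MeasurableSet Sb := hA.inter (hZm (measurableSet_singleton b))
  have hSaA : Sa ⊆ A := Set.inter_subset_left
  have hSbA : Sb ⊆ A := Set.inter_subset_left
  have hdisj : Disjoint Sa Sb := by
    rw [Set.disjoint_left]
    rintro ω ⟨-, ha⟩ ⟨-, hb⟩
    simp only [Set.mem_singleton_iff, Set.mem_preimage] at ha hb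
    exact hab.ne (by rw [← ha, hb])
  have hunion : A = Sa ∪ Sb := by
    ext ω
    constructor
    · intro hω
      rcases hZvals ω hω with h | h
      · exact Or.inl ⟨hω, h⟩
      · exact Or.inr ⟨hω, h⟩
    · rintro (h | h) <;> exact h.1
  have hIa0 : 0 ≤ ∫ ω in A, (b - Y ω) ∂μ :=
    setIntegral_nonneg hA fun ω hω => sub_nonneg.mpr (hω : Y ω ∈ Set.Icc a b).2
  have hIb0 : 0 ≤ ∫ ω in A, (Y ω - a) ∂μ :=
    setIntegral_nonneg hA fun ω hω => sub_nonneg.mpr (hω : Y ω ∈ Set.Icc a b).1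
  have hSaset : {ω | Y ω ∈ Set.Icc a b ∧ Z ω = a} = Sa := by
    rfl
  have hSbset : {ω | Y ω ∈ Set.Icc a b ∧ Z ω = b} = Sb := by
    rfl
  have hμa : (μ Sa).toReal = (b - a)⁻¹ * ∫ ω in A, (b - Y ω) ∂μ := by
    rw [← hSaset, hZa, ENNReal.toReal_ofReal (mul_nonneg (inv_nonneg.mpr hba.le) hIa0)]
  have hμb : (μ Sb).toReal = (b - a)⁻¹ * ∫ ω in A, (Y ω - a) ∂μ := by
    rw [← hSbset, hZb, ENNReal.toReal_ofReal (mul_nonneg (inv_nonneg.mpr hba.le) hIb0)]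
  -- splitting lemma for integrals over A of functions constant on Sa and Sb
  have hsplit : ∀ (f : Ω → ℝ) (c d : ℝ), IntegrableOn f A μ →
      (∀ ω ∈ Sa, f ω = c) → (∀ ω ∈ Sb, f ω = d) →
      ∫ ω in A, f ω ∂μ = (μ Sa).toReal * c + (μ Sb).toReal * d := by
    intro f c d hfi hfc hfd
    rw [hunion] at hfi ⊢
    rw [setIntegral_union hdisj hSb (hfi.mono_set Set.subset_union_left)
      (hfi.mono_set Set.subset_union_right),
      setIntegral_congr_fun hSa hfc, setIntegral_congr_fun hSb hfd,
      setIntegral_const, setIntegral_const, smul_eq_mul, smul_eq_mul, measureReal_def,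
      measureReal_def]
  -- evaluate the two basic integrals
  have hIa : ∫ ω in A, (b - Y ω) ∂μ = b * (μ A).toReal - ∫ ω in A, Y ω ∂μ := by
    rw [integral_sub (integrableOn_const (C := b) (measure_ne_top μ A))
      hYint.integrableOn, setIntegral_const, smul_eq_mul, mul_comm, measureReal_def]
  have hIb : ∫ ω in A, (Y ω - a) ∂μ = (∫ ω in A, Y ω ∂μ) - a * (μ A).toReal := by
    rw [integral_sub hYint.integrableOn (integrableOn_const (C := a) (measure_ne_top μ A)),
      setIntegral_const, smul_eq_mul, mul_comm, measureReal_def]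
  -- Part 1
  have hZA : ∫ ω in A, Z ω ∂μ = ∫ ω in A, Y ω ∂μ := by
    rw [hsplit Z a b hZint.integrableOn (fun ω hω => hω.2) (fun ω hω => hω.2),
      hμa, hμb, hIa, hIb]
    field_simp
    ring
  have hcompl : ∫ ω in Aᶜ, Z ω ∂μ = ∫ ω in Aᶜ, Y ω ∂μ :=
    setIntegral_congr_fun hA.compl fun ω hω => hZeq ω hω
  have part1 : ∫ ω, Z ω ∂μ = ∫ ω, Y ω ∂μ := by
    rw [← integral_add_compl hA hZint, ← integral_add_compl hA hYint, hZA, hcompl]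
  -- integrability of maxima
  have hmaxint : ∀ (x : ℝ) (W : Ω → ℝ), Integrable W μ →
      Integrable (fun ω => max x (W ω)) μ := by
    intro x W hW
    have := (integrable_const (μ := μ) x).sup hW
    simpa [Pi.sup_def] using this
  have hmaxint2 : ∀ (W : Ω → ℝ), Integrable W μ →
      Integrable (fun ω => max (X ω) (W ω)) μ := by
    intro W hW
    have := hXint.sup hW
    simpa [Pi.sup_def] using this
  -- pointwise (in x) comparison
  have key : ∀ x : ℝ, ∫ ω, max x (Y ω) ∂μ ≤ ∫ ω, max x (Z ω) ∂μ := by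
    intro x
    have hYx := hmaxint x Y hYint
    have hZx := hmaxint x Z hZint
    rw [← integral_add_compl hA hYx, ← integral_add_compl hA hZx,
      show (∫ ω in Aᶜ, max x (Y ω) ∂μ) = ∫ ω in Aᶜ, max x (Z ω) ∂μ from
        setIntegral_congr_fun hA.compl fun ω hω => by rw [hZeq ω hω]]
    refine add_le_add_left ?_ _
    have hZside : ∫ ω in A, max x (Z ω) ∂μ
        = (μ Sa).toReal * max x a + (μ Sb).toReal * max x b :=
      hsplit _ _ _ hZx.integrableOn
        (fun ω hω => by rw [show Z ω = a from hω.2])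
        (fun ω hω => by rw [show Z ω = b from hω.2])
    have h1 : IntegrableOn (fun ω => (b - Y ω) * max x a) A μ :=
      (((integrable_const b).sub hYint).mul_const _).integrableOn
    have h2 : IntegrableOn (fun ω => (Y ω - a) * max x b) A μ :=
      ((hYint.sub (integrable_const a)).mul_const _).integrableOn
    have hIneq : (b - a) * ∫ ω in A, max x (Y ω) ∂μ ≤
        (∫ ω in A, (b - Y ω) ∂μ) * max x a + (∫ ω in A, (Y ω - a) ∂μ) * max x b := by
      calc (b - a) * ∫ ω in A, max x (Y ω) ∂μ
          = ∫ ω in A, (b - a) * max x (Y ω) ∂μ := (integral_const_mul _ _).symm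
        _ ≤ ∫ ω in A, ((b - Y ω) * max x a + (Y ω - a) * max x b) ∂μ := by
            refine setIntegral_mono_on (hYx.integrableOn.const_mul _) (h1.add h2) hA ?_
            intro ω hω
            exact maxlin (hω : Y ω ∈ Set.Icc a b).1 (hω : Y ω ∈ Set.Icc a b).2
        _ = _ := by rw [integral_add h1 h2, integral_mul_const, integral_mul_const]
    rw [hZside, hμa, hμb,
      show (b - a)⁻¹ * (∫ ω in A, (b - Y ω) ∂μ) * max x a
          + (b - a)⁻¹ * (∫ ω in A, (Y ω - a) ∂μ) * max x b
        = (b - a)⁻¹ * ((∫ ω in A, (b - Y ω) ∂μ) * max x a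
          + (∫ ω in A, (Y ω - a) ∂μ) * max x b) from by ring]
    exact (le_inv_mul_iff₀ hba).mpr hIneq
  -- Fubini via independence
  have fub : ∀ W : Ω → ℝ, Measurable W → Integrable W μ → IndepFun X W μ →
      Integrable (fun p : ℝ × ℝ => max p.1 p.2) ((μ.map X).prod (μ.map W)) ∧
      ∫ ω, max (X ω) (W ω) ∂μ = ∫ x, ∫ y, max x y ∂(μ.map W) ∂(μ.map X) := by
    intro W hWm hWint hind
    have hmap : μ.map (fun ω => (X ω, W ω)) = (μ.map X).prod (μ.map W) :=
      (indepFun_iff_map_prod_eq_prod_map_map hXm.aemeasurable hWm.aemeasurable).mp hind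
    have hpm : Measurable (fun p : ℝ × ℝ => max p.1 p.2) :=
      measurable_fst.max measurable_snd
    have hintprod : Integrable (fun p : ℝ × ℝ => max p.1 p.2)
        ((μ.map X).prod (μ.map W)) := by
      rw [← hmap, integrable_map_measure hpm.aestronglyMeasurable
        (hXm.prodMk hWm).aemeasurable]
      exact hmaxint2 W hWint
    refine ⟨hintprod, ?_⟩
    calc ∫ ω, max (X ω) (W ω) ∂μ
        = ∫ p, max p.1 p.2 ∂(μ.map (fun ω => (X ω, W ω))) :=
          (integral_map (hXm.prodMk hWm).aemeasurable hpm.aestronglyMeasurable).symm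
      _ = ∫ p, max p.1 p.2 ∂((μ.map X).prod (μ.map W)) := by rw [hmap]
      _ = ∫ x, ∫ y, max x y ∂(μ.map W) ∂(μ.map X) := integral_prod _ hintprod
  obtain ⟨hintY, heqY⟩ := fub Y hYm hYint hXY
  obtain ⟨hintZ, heqZ⟩ := fub Z hZm hZint hXZ
  refine ⟨part1, ?_⟩
  rw [heqY, heqZ]
  refine integral_mono hintY.integral_prod_left hintZ.integral_prod_left fun x => ?_
  simp only
  rw [integral_map hYm.aemeasurable (measurable_const.max measurable_id').aestronglyMeasurable,
    integral_map hZm.aemeasurable (measurable_const.max measurable_id').aestronglyMeasurable]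
  exact key x
end

section
/- (Lemma 2.9) In the setting of Construction 2.6, the function β ↦ M(β) := M(Y_1(β),...,Y_n(β)) = E(max_{1≤h≤n} Y_h(β)) is convex on [0, β*]. -/
/-! For each outcome `ω`, `β ↦ Y_h(β)(ω)` is affine, so `β ↦ max_h Y_h(β)(ω)` is convex as a
maximum of affine functions, and convexity survives taking expectations. -/

open MeasureTheory ProbabilityTheory

theorem ConvexOn.finset_sup' {𝕜 E β ι : Type*} [Semiring 𝕜] [PartialOrder 𝕜] [AddCommMonoid E]
    [AddCommMonoid β] [LinearOrder β] [IsOrderedAddMonoid β] [SMul 𝕜 E] [Module 𝕜 β]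
    [PosSMulStrictMono 𝕜 β] {s : Set E} {t : Finset ι} (ht : t.Nonempty) {f : ι → E → β}
    (hf : ∀ i ∈ t, ConvexOn 𝕜 s (f i)) : ConvexOn 𝕜 s fun x => t.sup' ht fun i => f i x := by
  convert Finset.sup'_induction (p := ConvexOn 𝕜 s) ht f (fun _ h₁ _ h₂ => h₁.sup h₂) hf
    using 1
  exact funext fun x => (Finset.sup'_apply ht f x).symm

theorem MeasureTheory.Integrable.finset_sup' {α β ι : Type*} [MeasurableSpace α] {μ : Measure α}
    [NormedAddCommGroup β] [Lattice β] [HasSolidNorm β] [IsOrderedAddMonoid β]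
    {t : Finset ι} (ht : t.Nonempty) {f : ι → α → β} (hf : ∀ i ∈ t, Integrable (f i) μ) :
    Integrable (fun a => t.sup' ht fun i => f i a) μ := by
  convert Finset.sup'_induction (p := (Integrable · μ)) ht f (fun _ h₁ _ h₂ => h₁.sup h₂) hf
    using 1
  exact funext fun a => (Finset.sup'_apply ht f a).symm

theorem convexOn_const_add_mul (u v : ℝ) : ConvexOn ℝ Set.univ fun β : ℝ => u + β * v :=
  ⟨convex_univ, fun x _ y _ a b _ _ hab => le_of_eq <| by
    simp only [smul_eq_mul]; linear_combination (-u) * hab⟩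

theorem convexOn_integral {E Ω : Type*} [AddCommGroup E] [Module ℝ E] [MeasurableSpace Ω]
    {μ : Measure Ω} {s : Set E} {f : E → Ω → ℝ} (hs : Convex ℝ s)
    (hf : ∀ ω, ConvexOn ℝ s fun x => f x ω) (hint : ∀ x ∈ s, Integrable (f x) μ) :
    ConvexOn ℝ s fun x => ∫ ω, f x ω ∂μ := by
  refine ⟨hs, fun x hx y hy a b ha hb hab => ?_⟩
  calc ∫ ω, f (a • x + b • y) ω ∂μ
      ≤ ∫ ω, a * f x ω + b * f y ω ∂μ :=
        integral_mono (hint _ (hs hx hy ha hb hab))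
          (((hint x hx).const_mul a).add ((hint y hy).const_mul b))
          fun ω => (hf ω).2 hx hy ha hb hab
    _ = a • ∫ ω, f x ω ∂μ + b • ∫ ω, f y ω ∂μ := by
        rw [integral_add ((hint x hx).const_mul a) ((hint y hy).const_mul b),
          integral_const_mul, integral_const_mul, smul_eq_mul, smul_eq_mul]

theorem convexOn_integral_finset_sup'_const_add_mul {Ω ι : Type*} [MeasurableSpace Ω]
    {μ : Measure Ω} {t : Finset ι} (ht : t.Nonempty) {u v : ι → Ω → ℝ}
    (hu : ∀ i ∈ t, Integrable (u i) μ) (hv : ∀ i ∈ t, Integrable (v i) μ) :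
    ConvexOn ℝ Set.univ fun β => ∫ ω, t.sup' ht (fun i => u i ω + β * v i ω) ∂μ := by
  refine convexOn_integral convex_univ (fun ω => ?_) (fun β _ => ?_)
  · exact ConvexOn.finset_sup' ht fun i _ => convexOn_const_add_mul (u i ω) (v i ω)
  · exact Integrable.finset_sup' ht (f := fun i ω => u i ω + β * v i ω)
      fun i hi => (hu i hi).add ((hv i hi).const_mul β)

theorem integrable_ite_eq_one_mul {Ω : Type*} [MeasurableSpace Ω] {μ : Measure Ω}
    [IsFiniteMeasure μ] {X : Ω → ℝ} (hX : Measurable X) (hX01 : ∀ ω, X ω ∈ Set.Icc (0:ℝ) 1)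
    {β : ℝ} (hβ : β ∈ Set.Icc (0:ℝ) 1) :
    Integrable (fun ω => if X ω = 1 then 1 else β * X ω) μ := by
  refine .of_mem_Icc 0 1 ?_ (.of_forall fun ω => ?_)
  · exact (Measurable.ite (hX (measurableSet_singleton 1)) measurable_const
      (measurable_const.mul hX)).aemeasurable
  · obtain ⟨hX0, hX1⟩ := hX01 ω
    split_ifs
    · simp
    · exact ⟨mul_nonneg hβ.1 hX0, mul_le_one₀ hβ.2 hX0 hX1⟩

theorem Mn_eq_integral_finset_sup' {Ω : Type*} [MeasurableSpace Ω] (μ : Measure Ω)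
    (Y : ℕ → Ω → ℝ) {n : ℕ} (hn : (Finset.Icc 1 n).Nonempty) :
    Mn μ Y n = ∫ ω, (Finset.Icc 1 n).sup' hn (fun i => Y i ω) ∂μ := by
  simp only [Mn, Finset.sup'_eq_csSup_image, Finset.coe_Icc]

theorem stmt17_general
    {Ω : Type*} [MeasurableSpace Ω] (μ : Measure Ω) [IsProbabilityMeasure μ]
    (n : ℕ) (X : ℕ → Ω → ℝ)
    (hmeas : ∀ i, Measurable (X i))
    (hval : ∀ i ∈ Set.Icc 1 n, ∀ ω, X i ω ∈ Set.Icc (0:ℝ) 1)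
    (hn : 2 ≤ n)
    (p c' βstar : ℝ)
    (Xb : ℝ → ℕ → Ω → ℝ)
    (hXb : ∀ β h ω, Xb β h ω = if X h ω = 1 then 1 else β * X h ω)
    (Yb : ℝ → ℕ → Ω → ℝ)
    (hYb : ∀ β h ω, Yb β h ω = Xb β h ω - h * (β * c' + p))
    :
    ConvexOn ℝ (Set.Icc (0:ℝ) βstar) (fun β => Mn μ (Yb β) n) := by
  have hne : (Finset.Icc 1 n).Nonempty := Finset.nonempty_Icc.2 (by omega)
  have hYb_affine : Yb = fun β h ω => Yb 0 h ω + β * (Yb 1 h ω - Yb 0 h ω) := by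
    ext β h ω
    simp only [hYb, hXb]
    split_ifs <;> ring
  have hYb_int : ∀ β ∈ Set.Icc (0:ℝ) 1, ∀ h ∈ Finset.Icc 1 n, Integrable (Yb β h) μ := by
    intro β hβ h hh
    simp only [funext (hYb β h), hXb]
    exact (integrable_ite_eq_one_mul (hmeas h) (hval h (by simpa using hh)) hβ).sub
      (integrable_const _)
  have zero_mem : (0:ℝ) ∈ Set.Icc (0:ℝ) 1 := by simp
  have one_mem : (1:ℝ) ∈ Set.Icc (0:ℝ) 1 := by simp
  rw [hYb_affine]
  simp only [Mn_eq_integral_finset_sup' μ _ hne]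
  exact (convexOn_integral_finset_sup'_const_add_mul hne (hYb_int 0 zero_mem)
    fun h hh => (hYb_int 1 one_mem h hh).sub (hYb_int 0 zero_mem h hh)).subset
      (Set.subset_univ _) (convex_Icc _ _)

theorem stmt17
    {Ω : Type*} [MeasurableSpace Ω] (μ : Measure Ω) [IsProbabilityMeasure μ]
    (n : ℕ) (X : ℕ → Ω → ℝ)
    (hmeas : ∀ i, Measurable (X i))
    (hindep : iIndepFun (fun i : Fin n => X (i.1 + 1)) μ)
    (hident : ∀ i ∈ Set.Icc 1 n, IdentDistrib (X i) (X 1) μ μ)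
    (hval : ∀ i ∈ Set.Icc 1 n, ∀ ω, X i ω ∈ Set.Icc (0:ℝ) 1)
    (c : ℝ) (Y : ℕ → Ω → ℝ) (hY : ∀ i ω, Y i ω = X i ω - i * c)
    (hn : 2 ≤ n) (hc : 0 < c) (hEX : c < ∫ ω, X 1 ω ∂μ)
    (hsupp : μ {ω | X 1 ω ∈ insert (1:ℝ) (insert 0 ((fun i => Vn μ Y i) '' Set.Icc 1 (n-1)))} = 1)
    (h1 : 0 < μ {ω | X 1 ω = 1}) (h0 : 0 < μ {ω | X 1 ω = 0})
    (p c' βstar : ℝ)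
    (hp : p = (μ {ω | X 1 ω = 1}).toReal) (hc' : c' = c - p) (hβ : βstar = -p / c')
    (Xb : ℝ → ℕ → Ω → ℝ)
    (hXb : ∀ β h ω, Xb β h ω = if X h ω = 1 then 1 else β * X h ω)
    (Yb : ℝ → ℕ → Ω → ℝ)
    (hYb : ∀ β h ω, Yb β h ω = Xb β h ω - h * (β * c' + p))
    :
    ConvexOn ℝ (Set.Icc (0:ℝ) βstar) (fun β => Mn μ (Yb β) n) :=
  stmt17_general μ n X hmeas hval hn p c' βstar Xb hXb Yb hYb
end
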